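/- Fix integers d ≥ 1 and k ≥ 0, and set d⁺_n = C(d+n−1, n). Then lim_{M→∞} M·(1 − √(d⁺_{M−k}/d⁺_M)) = k(d−1)/2. Consequently, the de Finetti error bound 4·s_{M,k} = 4·(1 − √(d⁺_{M−k}/d⁺_M)) is asymptotic to 2(d−1)k/M as M → ∞. -/

import Mathlib

open MeasureTheory Matrix Filter
open scoped ComplexOrder

noncomputable section

/-- Index type for the standard basis of `H^{⊗ n}`, where the single-system
basis is indexed by `I`. -/
abbrev Idx (I : Type) (n : ℕ) := Fin n → I

/-- The rank-one projector `(|ψ⟩⟨ψ|)^{⊗ n}` on `H^{⊗ n}`, as a matrix. -/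
def pureTensor (I : Type) (n : ℕ) (ψ : I → ℂ) : Matrix (Idx I n) (Idx I n) ℂ :=
  Matrix.of fun a b => ∏ m, ψ (a m) * (starRingEnd ℂ) (ψ (b m))

/-- `d⁺_n = C(d + n - 1, n)`, the dimension of the totally symmetric subspace of the
`n`-fold tensor power of a `d`-dimensional space. -/
def dPlus (d n : ℕ) : ℕ := Nat.choose (d + n - 1) n

/-- `D⁺_n = C(d² + n - 1, n)`, the dimension of the totally symmetric subspace of the
`n`-fold tensor power of `K = H ⊗ H`, `dim H = d`. -/
def DPlus (d n : ℕ) : ℕ := Nat.choose (d ^ 2 + n - 1) n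

/-- The orthogonal projector onto the totally symmetric subspace of `H^{⊗ n}`:
the average `(1/n!) ∑_π U_π` of the permutation unitaries. -/
def symProj (I : Type) [Fintype I] [DecidableEq I] (n : ℕ) : Matrix (Idx I n) (Idx I n) ℂ :=
  ((Nat.factorial n : ℂ))⁻¹ • ∑ π : Equiv.Perm (Fin n),
    Matrix.of (fun a b : Idx I n => if a = b ∘ π then (1 : ℂ) else 0)

/-- Embedding of the first `k` factor positions into `Fin M`. -/
def embL {M k : ℕ} (h : k ≤ M) (i : Fin k) : Fin M :=
  finCongr (Nat.add_sub_cancel' h) (finSumFinEquiv (Sum.inl i))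

/-- Embedding of the last `M - k` factor positions into `Fin M`. -/
def embR {M k : ℕ} (h : k ≤ M) (j : Fin (M - k)) : Fin M :=
  finCongr (Nat.add_sub_cancel' h) (finSumFinEquiv (Sum.inr j))

/-- Join a multi-index on the first `k` factors with one on the last `M - k` factors. -/
def joinIdx {I : Type} {M k : ℕ} (h : k ≤ M) (a : Idx I k) (c : Idx I (M - k)) : Idx I M :=
  fun i => Sum.elim a c (finSumFinEquiv.symm (finCongr (Nat.add_sub_cancel' h).symm i))

/-- Partial trace over the last `M - k` tensor factors. -/
def ptrace {I : Type} [Fintype I] (M k : ℕ) (h : k ≤ M) (X : Matrix (Idx I M) (Idx I M) ℂ) :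
    Matrix (Idx I k) (Idx I k) ℂ :=
  Matrix.of fun a b => ∑ c : Idx I (M - k), X (joinIdx h a c) (joinIdx h b c)

/-- The operator `1^{⊗ k} ⊗ (|ψ⟩⟨ψ|)^{⊗ (M-k)}` on `H^{⊗ M}`. -/
def idTensorPure {I : Type} [DecidableEq I] {M k : ℕ} (h : k ≤ M) (ψ : I → ℂ) :
    Matrix (Idx I M) (Idx I M) ℂ :=
  Matrix.of fun a b =>
    (if (fun i => a (embL h i)) = (fun i => b (embL h i)) then (1 : ℂ) else 0) *
      ∏ j, ψ (a (embR h j)) * (starRingEnd ℂ) (ψ (b (embR h j)))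

/-- Entrywise (Bochner) integral of a matrix-valued function of a pure state. -/
def matIntegral {A : Type} {J : Type} (μ : Measure (J → ℂ))
    (f : (J → ℂ) → Matrix A A ℂ) : Matrix A A ℂ :=
  Matrix.of fun a b => ∫ ψ, f ψ a b ∂μ

/-- The trace norm `‖X‖₁ = Tr |X| = Tr √(Xᴴ X)`. -/
def traceNorm {A : Type} [Fintype A] [DecidableEq A] (X : Matrix A A ℂ) : ℝ :=
  (((Matrix.posSemidef_conjTranspose_mul_self X).1.eigenvectorUnitary : Matrix A A ℂ) *
      Matrix.diagonal ((fun x : ℝ => (x : ℂ)) ∘ Real.sqrt ∘ (Matrix.posSemidef_conjTranspose_mul_self X).1.eigenvalues) *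
      (star (Matrix.posSemidef_conjTranspose_mul_self X).1.eigenvectorUnitary : Matrix A A ℂ)).trace.re

/-- A quantum state: a positive semidefinite matrix of unit trace. -/
def IsState {A : Type} [Fintype A] (ρ : Matrix A A ℂ) : Prop :=
  ρ.PosSemidef ∧ ρ.trace = 1

/-- `μ` is the unitarily invariant (Haar) probability measure on the pure states of
the Hilbert space with orthonormal basis indexed by `I`: a probability measure carried
by the unit sphere and invariant under every unitary. -/
def IsHaarPure (I : Type) [Fintype I] [DecidableEq I] (μ : Measure (I → ℂ)) : Prop :=
  IsProbabilityMeasure μ ∧ (∀ᵐ ψ ∂μ, ∑ i, Complex.normSq (ψ i) = 1) ∧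
    ∀ U : Matrix.unitaryGroup I ℂ, μ.map (Matrix.mulVec (U : Matrix I I ℂ)) = μ

/-- The extension `id_m ⊗ E` of a linear map on matrices. -/
def extendMap {A B : Type} [Fintype A] [DecidableEq A] (m : ℕ)
    (E : Matrix A A ℂ →ₗ[ℂ] Matrix B B ℂ)
    (X : Matrix (Fin m × A) (Fin m × A) ℂ) : Matrix (Fin m × B) (Fin m × B) ℂ :=
  Matrix.of fun p q => E (Matrix.of fun a b => X (p.1, a) (q.1, b)) p.2 q.2

/-- Complete positivity: every extension `id_m ⊗ E` maps positive semidefinite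
matrices to positive semidefinite matrices. -/
def IsCP {A B : Type} [Fintype A] [DecidableEq A] [Fintype B] [DecidableEq B]
    (E : Matrix A A ℂ →ₗ[ℂ] Matrix B B ℂ) : Prop :=
  ∀ (m : ℕ) (X : Matrix (Fin m × A) (Fin m × A) ℂ), X.PosSemidef → (extendMap m E X).PosSemidef

/-- Trace preservation. -/
def IsTP {A B : Type} [Fintype A] [Fintype B]
    (E : Matrix A A ℂ →ₗ[ℂ] Matrix B B ℂ) : Prop :=
  ∀ X : Matrix A A ℂ, (E X).trace = X.trace

/-- `F` is the adjoint (Heisenberg picture) of `E`: `Tr[E(ρ) O] = Tr[ρ F(O)]`. -/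
def IsAdjointPair' {A B : Type} [Fintype A] [Fintype B]
    (E : Matrix A A ℂ →ₗ[ℂ] Matrix B B ℂ) (F : Matrix B B ℂ →ₗ[ℂ] Matrix A A ℂ) : Prop :=
  ∀ (ρ : Matrix A A ℂ) (O : Matrix B B ℂ), (E ρ * O).trace = (ρ * F O).trace

/-- Partial trace of a pure state of `K = H ⊗ H` over the second factor of `H`. -/
def redK (d : ℕ) (Ψ : Fin d × Fin d → ℂ) : Matrix (Fin d) (Fin d) ℂ :=
  Matrix.of fun a b => ∑ c, Ψ (a, c) * (starRingEnd ℂ) (Ψ (b, c))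

/-- The `n`-fold tensor power `σ^{⊗ n}` of a single-system operator. -/
def tensorPow (d n : ℕ) (σ : Matrix (Fin d) (Fin d) ℂ) :
    Matrix (Idx (Fin d) n) (Idx (Fin d) n) ℂ :=
  Matrix.of fun a b => ∏ i, σ (a i) (b i)

lemma dPlus_pos' (d n : ℕ) (hd : 1 ≤ d) : 0 < dPlus d n :=
  Nat.choose_pos (by omega)

lemma dPlus_rec' (d n : ℕ) (hd : 1 ≤ d) :
    dPlus d (n + 1) * (n + 1) = dPlus d n * (d + n) := by
  have h := Nat.add_one_mul_choose_eq (d + n - 1) n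
  rw [show d + n - 1 + 1 = d + n by omega] at h
  unfold dPlus
  rw [show d + (n + 1) - 1 = d + n by omega]
  rw [← h]; ring

lemma inv_nat_tendsto : Tendsto (fun M : ℕ => ((M : ℝ))⁻¹) atTop (nhds 0) :=
  tendsto_inv_atTop_zero.comp tendsto_natCast_atTop_atTop

lemma key_lemma (d : ℕ) (hd : 1 ≤ d) : ∀ k : ℕ,
    Tendsto (fun M : ℕ => (M : ℝ) * (1 - (dPlus d (M - k) : ℝ) / (dPlus d M : ℝ)))
      atTop (nhds ((k : ℝ) * ((d : ℝ) - 1))) := by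
  have hne : ∀ n, ((dPlus d n : ℝ)) ≠ 0 := fun n =>
    Nat.cast_ne_zero.mpr (dPlus_pos' d n hd).ne'
  intro k
  induction k with
  | zero =>
    simp only [Nat.sub_zero, Nat.cast_zero, zero_mul]
    have : (fun M : ℕ => (M : ℝ) * (1 - (dPlus d M : ℝ) / (dPlus d M : ℝ))) = fun _ => 0 := by
      funext M; rw [div_self (hne M)]; ring
    rw [this]; exact tendsto_const_nhds
  | succ k ih =>
    -- ratio tends to 1
    have hr1 : Tendsto (fun M : ℕ => (dPlus d (M - k) : ℝ) / (dPlus d M : ℝ)) atTop (nhds 1) := by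
      have h0 : Tendsto (fun M : ℕ =>
          ((M : ℝ) * (1 - (dPlus d (M - k) : ℝ) / (dPlus d M : ℝ))) * ((M : ℝ))⁻¹)
          atTop (nhds ((k : ℝ) * ((d : ℝ) - 1) * 0)) := ih.mul inv_nat_tendsto
      rw [mul_zero] at h0
      have heq : ∀ᶠ M : ℕ in atTop,
          ((M : ℝ) * (1 - (dPlus d (M - k) : ℝ) / (dPlus d M : ℝ))) * ((M : ℝ))⁻¹
          = 1 - (dPlus d (M - k) : ℝ) / (dPlus d M : ℝ) := by
        filter_upwards [eventually_ge_atTop 1] with M hM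
        have : (M : ℝ) ≠ 0 := Nat.cast_ne_zero.mpr (by omega)
        field_simp
      have h1 := h0.congr' heq
      have h2 : Tendsto (fun M : ℕ => 1 - (1 - (dPlus d (M - k) : ℝ) / (dPlus d M : ℝ)))
          atTop (nhds (1 - 0)) := (tendsto_const_nhds).sub h1
      rw [sub_zero] at h2
      exact h2.congr (fun M => by ring)
    -- the extra factor's contribution
    have hfac : Tendsto (fun M : ℕ => (M : ℝ) * ((d : ℝ) - 1) / ((d : ℝ) + (M : ℝ) - (k : ℝ) - 1))
        atTop (nhds ((d : ℝ) - 1)) := by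
      set c : ℝ := (d : ℝ) - (k : ℝ) - 1 with hc
      have hM : Tendsto (fun M : ℕ => (M : ℝ) + c) atTop atTop :=
        tendsto_atTop_add_const_right atTop c tendsto_natCast_atTop_atTop
      have hinv : Tendsto (fun M : ℕ => ((M : ℝ) + c)⁻¹) atTop (nhds 0) :=
        hM.inv_tendsto_atTop
      have h3 : Tendsto (fun M : ℕ => ((d : ℝ) - 1) * (1 - c * ((M : ℝ) + c)⁻¹))
          atTop (nhds (((d : ℝ) - 1) * (1 - c * 0))) :=
        tendsto_const_nhds.mul (tendsto_const_nhds.sub (tendsto_const_nhds.mul hinv))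
      rw [show ((d : ℝ) - 1) * (1 - c * 0) = (d : ℝ) - 1 by ring] at h3
      apply h3.congr'
      filter_upwards [hM.eventually_gt_atTop 0] with M hMpos
      have hne' : (M : ℝ) + c ≠ 0 := hMpos.ne'
      rw [show (d : ℝ) + (M : ℝ) - (k : ℝ) - 1 = (M : ℝ) + c by rw [hc]; ring]
      field_simp
      ring
    have hmain : Tendsto (fun M : ℕ =>
        (M : ℝ) * (1 - (dPlus d (M - k) : ℝ) / (dPlus d M : ℝ))
        + (dPlus d (M - k) : ℝ) / (dPlus d M : ℝ)
          * ((M : ℝ) * ((d : ℝ) - 1) / ((d : ℝ) + (M : ℝ) - (k : ℝ) - 1)))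
        atTop (nhds ((k : ℝ) * ((d : ℝ) - 1) + 1 * ((d : ℝ) - 1))) :=
      ih.add (hr1.mul hfac)
    rw [show (k : ℝ) * ((d : ℝ) - 1) + 1 * ((d : ℝ) - 1) = ((k : ℕ).succ : ℝ) * ((d : ℝ) - 1)
      by push_cast; ring] at hmain
    apply hmain.congr'
    filter_upwards [eventually_ge_atTop (k + 1)] with M hM
    -- recurrence: dPlus d (M - k) * (M - k) = dPlus d (M - (k+1)) * (d + (M - (k+1)))
    have hrec := dPlus_rec' d (M - (k + 1)) hd
    rw [show M - (k + 1) + 1 = M - k by omega] at hrec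
    have hcast : (dPlus d (M - k) : ℝ) * ((M : ℝ) - (k : ℝ)) =
        (dPlus d (M - (k + 1)) : ℝ) * ((d : ℝ) + (M : ℝ) - (k : ℝ) - 1) := by
      have h3 := congrArg (Nat.cast : ℕ → ℝ) hrec
      have h1 : ((M - k : ℕ) : ℝ) = (M : ℝ) - (k : ℝ) := by
        rw [Nat.cast_sub (by omega)]
      have h2 : ((M - (k + 1) : ℕ) : ℝ) = (M : ℝ) - (k : ℝ) - 1 := by
        rw [Nat.cast_sub (by omega)]; push_cast; ring
      push_cast at h3
      rw [h1, h2] at h3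
      linarith [h3]
    have hden : (d : ℝ) + (M : ℝ) - (k : ℝ) - 1 ≠ 0 := by
      have h1 : (1 : ℝ) ≤ (d : ℝ) := by exact_mod_cast hd
      have h2 : (k : ℝ) + 1 ≤ (M : ℝ) := by exact_mod_cast hM
      linarith
    have hDM := hne M
    have hval : (dPlus d (M - (k + 1)) : ℝ)
        = (dPlus d (M - k) : ℝ) * ((M : ℝ) - (k : ℝ)) / ((d : ℝ) + (M : ℝ) - (k : ℝ) - 1) := by
      field_simp
      linarith [hcast]
    rw [hval]
    field_simp
    ring

/-- `lim_{M→∞} M (1 − √(d⁺_{M−k}/d⁺_M)) = k(d−1)/2`, and consequently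
the de Finetti error bound `4 (1 − √(d⁺_{M−k}/d⁺_M))` is asymptotic to `2(d−1)k/M`
as `M → ∞`. -/
theorem stmt7 (d k : ℕ) (hd : 1 ≤ d) :
    Tendsto (fun M : ℕ =>
        (M : ℝ) * (1 - Real.sqrt ((dPlus d (M - k) : ℝ) / (dPlus d M : ℝ))))
      atTop (nhds ((k : ℝ) * ((d : ℝ) - 1) / 2)) ∧
    Asymptotics.IsEquivalent atTop
      (fun M : ℕ => 4 * (1 - Real.sqrt ((dPlus d (M - k) : ℝ) / (dPlus d M : ℝ))))
      (fun M : ℕ => 2 * ((d : ℝ) - 1) * (k : ℝ) / (M : ℝ)) := by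
  have hne : ∀ n, ((dPlus d n : ℝ)) ≠ 0 := fun n =>
    Nat.cast_ne_zero.mpr (dPlus_pos' d n hd).ne'
  set r : ℕ → ℝ := fun M => (dPlus d (M - k) : ℝ) / (dPlus d M : ℝ) with hrdef
  have hrnn : ∀ M, 0 ≤ r M := fun M => div_nonneg (Nat.cast_nonneg _) (Nat.cast_nonneg _)
  have hB : Tendsto (fun M : ℕ => (M : ℝ) * (1 - r M)) atTop
      (nhds ((k : ℝ) * ((d : ℝ) - 1))) := key_lemma d hd k
  -- r tends to 1
  have hr1 : Tendsto r atTop (nhds 1) := by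
    have h0 : Tendsto (fun M : ℕ => ((M : ℝ) * (1 - r M)) * ((M : ℝ))⁻¹)
        atTop (nhds ((k : ℝ) * ((d : ℝ) - 1) * 0)) := hB.mul inv_nat_tendsto
    rw [mul_zero] at h0
    have heq : ∀ᶠ M : ℕ in atTop, ((M : ℝ) * (1 - r M)) * ((M : ℝ))⁻¹ = 1 - r M := by
      filter_upwards [eventually_ge_atTop 1] with M hM
      have hM0 : (M : ℝ) ≠ 0 := Nat.cast_ne_zero.mpr (by omega)
      field_simp
    have h1 := h0.congr' heq
    have h2 : Tendsto (fun M : ℕ => 1 - (1 - r M)) atTop (nhds (1 - 0)) :=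
      tendsto_const_nhds.sub h1
    rw [sub_zero] at h2
    exact h2.congr (fun M => by ring)
  have hs : Tendsto (fun M : ℕ => Real.sqrt (r M)) atTop (nhds 1) := by
    have := hr1.sqrt
    rwa [Real.sqrt_one] at this
  -- Part 1
  have hden : Tendsto (fun M : ℕ => 1 + Real.sqrt (r M)) atTop (nhds 2) := by
    have h := Tendsto.add (tendsto_const_nhds (x := (1 : ℝ)) (f := atTop)) hs
    rwa [show (1 : ℝ) + 1 = 2 from by norm_num] at h
  have part1 : Tendsto (fun M : ℕ => (M : ℝ) * (1 - Real.sqrt (r M))) atTop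
      (nhds ((k : ℝ) * ((d : ℝ) - 1) / 2)) := by
    have h1 := hB.div hden two_ne_zero
    apply h1.congr
    intro M
    have hsnn : 0 ≤ Real.sqrt (r M) := Real.sqrt_nonneg _
    have hsq : Real.sqrt (r M) ^ 2 = r M := Real.sq_sqrt (hrnn M)
    have hne1 : (1 : ℝ) + Real.sqrt (r M) ≠ 0 := by positivity
    simp only [Pi.div_apply]
    rw [div_eq_iff hne1]
    nlinarith [hsq]
  refine ⟨part1, ?_⟩
  -- Part 2
  by_cases hz : ((d : ℝ) - 1) * (k : ℝ) = 0
  · have hreq : ∀ M, r M = 1 := by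
      rcases mul_eq_zero.mp hz with h | h
      · have hd1 : d = 1 := by
          have : (d : ℝ) = 1 := by linarith
          exact_mod_cast this
        intro M
        simp [hrdef, hd1, dPlus]
      · have hk : k = 0 := by exact_mod_cast h
        intro M
        simp only [hrdef, hk, Nat.sub_zero]
        exact div_self (hne M)
    have hfeq : (fun M : ℕ => 4 * (1 - Real.sqrt (r M))) = fun _ : ℕ => (0 : ℝ) := by
      funext M; rw [hreq M, Real.sqrt_one]; ring
    have hgeq : (fun M : ℕ => 2 * ((d : ℝ) - 1) * (k : ℝ) / (M : ℝ)) = fun _ : ℕ => (0 : ℝ) := by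
      funext M
      rw [show 2 * ((d : ℝ) - 1) * (k : ℝ) = 2 * (((d : ℝ) - 1) * (k : ℝ)) from by ring, hz]
      simp
    rw [hfeq, hgeq]
  · have hd1 : (d : ℝ) - 1 ≠ 0 := fun h => hz (by rw [h, zero_mul])
    have hk0 : (k : ℝ) ≠ 0 := fun h => hz (by rw [h, mul_zero])
    apply Asymptotics.isEquivalent_of_tendsto_one
    · have h2 := part1.mul_const (2 / (((d : ℝ) - 1) * (k : ℝ)))
      rw [show (k : ℝ) * ((d : ℝ) - 1) / 2 * (2 / (((d : ℝ) - 1) * (k : ℝ))) = 1 from by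
        field_simp] at h2
      apply h2.congr'
      filter_upwards [eventually_ge_atTop 1] with M hM
      have hM0 : (M : ℝ) ≠ 0 := Nat.cast_ne_zero.mpr (by omega)
      simp only [Pi.div_apply]
      set s := Real.sqrt (r M) with hsdef
      field_simp
      ring
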